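/- Let W : ℝ² → ℝ satisfy assumptions (A0)–(A2), let ρ^ini ∈ 𝒫₂(ℝ²), and consider the finite volume scheme with initial values ρ⁰_{ij} = (1/(ΔxΔy)) ρ^ini(C_{ij}). Assume the CFL condition w_∞ (1/Δx + 1/Δy) Δt ≤ 1/2. Then the scheme conserves mass and center of mass: for all n ∈ ℕ, Σ_{i,j∈ℤ²} ρ^n_{ij} Δx Δy = Σ_{i,j∈ℤ²} ρ⁰_{ij} Δx Δy = 1, Σ_{i,j∈ℤ²} x_i ρ^n_{ij} = Σ_{i,j∈ℤ²} x_i ρ⁰_{ij}, and Σ_{i,j∈ℤ²} y_j ρ^n_{ij} = Σ_{i,j∈ℤ²} y_j ρ⁰_{ij} (all these sums being absolutely convergent). -/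

import Mathlib

open MeasureTheory Filter Metric
open scoped RealInnerProductSpace Topology BigOperators NNReal ENNReal Classical

noncomputable section

/-- The extended gradient `∇̂W`: `∇W(x)` for `x ≠ 0` and `0` at the origin. -/
def hatGrad (d : ℕ) (W : EuclideanSpace ℝ (Fin d) → ℝ) (x : EuclideanSpace ℝ (Fin d)) :
    EuclideanSpace ℝ (Fin d) :=
  if x = 0 then 0 else gradient W x

/-- Assumptions (A0)-(A2): `W` is Lipschitz with constant `winf ≥ 0`, even, `W 0 = 0`,
`lam`-convex for some `lam ≤ 0`, continuously differentiable away from the origin,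
with gradient bounded by `winf` away from the origin. -/
structure PointyPotential (d : ℕ) (W : EuclideanSpace ℝ (Fin d) → ℝ) (winf lam : ℝ) : Prop where
  winf_nonneg : 0 ≤ winf
  lipschitz : LipschitzWith (Real.toNNReal winf) W
  even : ∀ x, W (-x) = W x
  zero_val : W 0 = 0
  lam_nonpos : lam ≤ 0
  lamConvex : ConvexOn ℝ Set.univ fun x => W x - lam / 2 * ‖x‖ ^ 2
  diffAway : ∀ x : EuclideanSpace ℝ (Fin d), x ≠ 0 → DifferentiableAt ℝ W x
  gradContinuous : ContinuousOn (gradient W) {x : EuclideanSpace ℝ (Fin d) | x ≠ 0}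
  gradBound : ∀ x : EuclideanSpace ℝ (Fin d), x ≠ 0 → ‖gradient W x‖ ≤ winf

/-- The grid cell `C_{ij} = [iΔx,(i+1)Δx) × [jΔy,(j+1)Δy)` as a subset of `ℝ²`. -/
def cell2 (dx dy : ℝ) (i j : ℤ) : Set (EuclideanSpace ℝ (Fin 2)) :=
  {p : EuclideanSpace ℝ (Fin 2) |
    p 0 ∈ Set.Ico ((i : ℝ) * dx) (((i : ℝ) + 1) * dx) ∧
    p 1 ∈ Set.Ico ((j : ℝ) * dy) (((j : ℝ) + 1) * dy)}

/-- `D_cW_{ij}^{kl} = ∬_{C_{kl}} ∬_{C_{ij}} ∂̂_cW(p − q) dp dq`, where `c = 0` gives the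
`x`-component `∂̂_xW` and `c = 1` the `y`-component `∂̂_yW` of the extended gradient. -/
def DW (W : EuclideanSpace ℝ (Fin 2) → ℝ) (dx dy : ℝ) (c : Fin 2) (i j k l : ℤ) : ℝ :=
  ∫ q in cell2 dx dy k l, ∫ p in cell2 dx dy i j, hatGrad 2 W (p - q) c

/-- The discrete velocity `a_c{}_{ij} = (1/(ΔxΔy)) Σ_{k,ℓ} ρ_{kℓ} D_cW_{ij}^{kℓ}`. -/
def discVel (W : EuclideanSpace ℝ (Fin 2) → ℝ) (dx dy : ℝ) (ρ : ℤ → ℤ → ℝ) (c : Fin 2)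
    (i j : ℤ) : ℝ :=
  (1 / (dx * dy)) * ∑' k : ℤ, ∑' l : ℤ, ρ k l * DW W dx dy c i j k l

/-- One step of the finite volume scheme (Lax–Friedrichs type update rule). -/
def fvStep (W : EuclideanSpace ℝ (Fin 2) → ℝ) (winf dx dy dt : ℝ) (ρ : ℤ → ℤ → ℝ)
    (i j : ℤ) : ℝ :=
  let ax : ℤ → ℤ → ℝ := fun i j => discVel W dx dy ρ 0 i j
  let ay : ℤ → ℤ → ℝ := fun i j => discVel W dx dy ρ 1 i j
  -- half-index quantities: `axh i j = a_x{}_{i+1/2,j}`, `ρxh i j = ρ_{i+1/2,j}`, etc.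
  let axh : ℤ → ℤ → ℝ := fun i j => (ax i j + ax (i + 1) j) / 2
  let ayh : ℤ → ℤ → ℝ := fun i j => (ay i j + ay i (j + 1)) / 2
  let ρxh : ℤ → ℤ → ℝ := fun i j => (ρ i j + ρ (i + 1) j) / 2
  let ρyh : ℤ → ℤ → ℝ := fun i j => (ρ i j + ρ i (j + 1)) / 2
  ρ i j - (dt / dx) * (axh i j * ρxh i j - axh (i - 1) j * ρxh (i - 1) j)
        - (dt / dy) * (ayh i j * ρyh i j - ayh i (j - 1) * ρyh i (j - 1))
        + (dt * winf / (2 * dx)) * (ρ (i + 1) j - 2 * ρ i j + ρ (i - 1) j)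
        + (dt * winf / (2 * dy)) * (ρ i (j + 1) - 2 * ρ i j + ρ i (j - 1))

/-- The finite volume approximation `ρ^n_{ij}`, initialized by cell averages of `ρini`. -/
def fvRho (W : EuclideanSpace ℝ (Fin 2) → ℝ) (winf dx dy dt : ℝ)
    (ρini : Measure (EuclideanSpace ℝ (Fin 2))) : ℕ → ℤ → ℤ → ℝ
  | 0 => fun i j => (ρini (cell2 dx dy i j)).toReal / (dx * dy)
  | n + 1 => fun i j => fvStep W winf dx dy dt (fvRho W winf dx dy dt ρini n) i j

/-- `μ ∈ 𝒫₂(ℝ²)`: a Borel probability measure with finite second moment. -/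
def MemP2 {d : ℕ} (μ : Measure (EuclideanSpace ℝ (Fin d))) : Prop :=
  IsProbabilityMeasure μ ∧ Integrable (fun x => ‖x‖ ^ 2) μ

/-!
The scheme is in conservation form. Against an affine weight `w` (`1`, `x_i` or `y_j`), a flux
difference `F_p - F_{p-e}` sums to `-(w(p + e) - w p) ∑ F` and a second difference sums to `0`,
so it suffices that the total flux `∑_p a_{p+e/2} ρ_{p+e/2}` vanishes. With `s = ρ + ρ(· + e)`
and the kernel `D(p, q) = D_cW_p^q`, translation invariance of `D` rewrites this total flux as
`(4ΔxΔy)⁻¹ ∑_{p,q} s_p s_q D(p, q)`, which is zero because `D` is antisymmetric (`∇̂W` is odd).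
Since `|D| ≤ w_∞ (ΔxΔy)²`, all these double sums converge absolutely as long as `ρ` is summable,
and the first moments of `ρ⁰` are finite because `ρ^ini` has a finite second moment.
-/

local notation "ℝ²" => EuclideanSpace ℝ (Fin 2)

section Summation

variable {ι : Type*}

lemma Summable.mul_of_abs_le {f g : ι → ℝ} {A : ℝ} (hf : Summable f) (hg : ∀ i, |g i| ≤ A) :
    Summable fun i => f i * g i :=
  Summable.of_norm_bounded (hf.abs.mul_right A) fun i => by
    rw [Real.norm_eq_abs, abs_mul]
    exact mul_le_mul_of_nonneg_left (hg i) (abs_nonneg _)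

lemma tsum_mul_tsum_mul_eq_zero_of_antisymm {s : ι → ℝ} {d : ι → ι → ℝ} {C : ℝ}
    (hs : Summable s) (hd : ∀ p q, |d p q| ≤ C) (hanti : ∀ p q, d q p = -d p q) :
    ∑' p, s p * ∑' q, s q * d p q = 0 := by
  have hf : Summable fun z : ι × ι => s z.1 * s z.2 * d z.1 z.2 :=
    (summable_mul_of_summable_norm (f := s) (g := s) hs.abs hs.abs).mul_of_abs_le
      fun z => hd z.1 z.2
  have hswap : ∑' z : ι × ι, s z.1 * s z.2 * d z.1 z.2 =
      -∑' z : ι × ι, s z.1 * s z.2 * d z.1 z.2 := by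
    rw [← tsum_neg, ← (Equiv.prodComm ι ι).tsum_eq]
    exact tsum_congr fun z => by simp only [Equiv.prodComm_apply, Prod.fst_swap,
      Prod.snd_swap, hanti z.1 z.2]; ring
  have hprod : ∑' p, s p * ∑' q, s q * d p q = ∑' z : ι × ι, s z.1 * s z.2 * d z.1 z.2 := by
    rw [hf.tsum_prod' hf.prod_factor]
    exact tsum_congr fun p => by rw [← tsum_mul_left]; exact tsum_congr fun q => by ring
  linarith

variable {G : Type*} [AddGroup G]

lemma tsum_mul_apply_add_eq_of_add_invariant {r : G → ℝ} {d : G → G → ℝ}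
    (htr : ∀ p q e, d (p + e) (q + e) = d p q) (p e : G) :
    ∑' q, r q * d (p + e) q = ∑' q, r (q + e) * d p q := by
  rw [← (Equiv.addRight e).tsum_eq]
  simp only [Equiv.coe_addRight, htr]

lemma tsum_interface_flux_eq_zero {r : G → ℝ} {d : G → G → ℝ} {C : ℝ} (hr : Summable r)
    (hd : ∀ p q, |d p q| ≤ C) (hanti : ∀ p q, d q p = -d p q)
    (htr : ∀ p q e, d (p + e) (q + e) = d p q) (e : G) :
    ∑' p, (∑' q, r q * d p q + ∑' q, r q * d (p + e) q) * (r p + r (p + e)) = 0 := by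
  have hre : Summable fun q => r (q + e) := (Equiv.addRight e).summable_iff.mpr hr
  have hv : ∀ p, ∑' q, r q * d p q + ∑' q, r q * d (p + e) q =
      ∑' q, (r q + r (q + e)) * d p q := by
    intro p
    rw [tsum_mul_apply_add_eq_of_add_invariant htr, ← Summable.tsum_add (hr.mul_of_abs_le (hd p))
      (hre.mul_of_abs_le (hd p))]
    exact tsum_congr fun q => by ring
  simp_rw [hv, mul_comm _ (r _ + r (_ + e))]
  exact tsum_mul_tsum_mul_eq_zero_of_antisymm (hr.add hre) hd hanti

end Summation

section AffineWeight

variable {G : Type*} [AddGroup G] {w ℓ g : G → ℝ} {S T : ℝ}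

lemma add_apply_neg_eq_zero_of_affine (hw : ∀ p e, w (p + e) = w p + ℓ e) (e : G) :
    ℓ e + ℓ (-e) = 0 := by
  have := hw (0 + e) (-e)
  rw [add_neg_cancel_right, hw] at this
  linarith

lemma HasSum.mul_apply_add (hw : ∀ p e, w (p + e) = w p + ℓ e) (hg : HasSum g S)
    (hwg : HasSum (fun p => w p * g p) T) (e : G) :
    HasSum (fun p => w p * g (p + e)) (T - ℓ e * S) :=
  ((Equiv.addRight e).hasSum_iff.mpr (hwg.sub (hg.mul_left (ℓ e)))).congr_fun fun p => by
    simp only [Function.comp_apply, Equiv.coe_addRight, hw]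
    ring

lemma HasSum.mul_sub_apply_sub (hw : ∀ p e, w (p + e) = w p + ℓ e) (hg : HasSum g 0)
    (hwg : HasSum (fun p => w p * g p) T) (e : G) :
    HasSum (fun p => w p * (g p - g (p - e))) 0 := by
  have h := hwg.sub (hg.mul_apply_add hw hwg (-e))
  rw [mul_zero, sub_zero, sub_self] at h
  exact h.congr_fun fun p => by rw [sub_eq_add_neg p, mul_sub]

lemma HasSum.mul_second_diff (hw : ∀ p e, w (p + e) = w p + ℓ e) (hg : HasSum g S)
    (hwg : HasSum (fun p => w p * g p) T) (e : G) :
    HasSum (fun p => w p * (g (p + e) - 2 * g p + g (p - e))) 0 := by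
  have h := ((hg.mul_apply_add hw hwg e).sub (hwg.mul_left 2)).add (hg.mul_apply_add hw hwg (-e))
  rw [show T - ℓ e * S - 2 * T + (T - ℓ (-e) * S) = 0 by
    linear_combination (-S) * add_apply_neg_eq_zero_of_affine hw e] at h
  exact h.congr_fun fun p => by rw [sub_eq_add_neg p]; ring

end AffineWeight

section HatGrad

variable {d : ℕ} {W : EuclideanSpace ℝ (Fin d) → ℝ}

lemma hatGrad_neg (hW : ∀ x, W (-x) = W x) (x : EuclideanSpace ℝ (Fin d)) :
    hatGrad d W (-x) = -hatGrad d W x := by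
  have hfd : fderiv ℝ W x = -fderiv ℝ W (-x) := by
    conv_lhs => rw [show W = W ∘ ContinuousLinearEquiv.neg ℝ from funext fun y => (hW y).symm]
    rw [(ContinuousLinearEquiv.neg ℝ).comp_right_fderiv]
    ext y
    simp
  by_cases hx : x = 0
  · simp [hatGrad, hx]
  · simp [hatGrad, hx, gradient, hfd]

lemma measurable_hatGrad : Measurable (hatGrad d W) :=
  Measurable.ite (measurableSet_singleton 0) measurable_const
    ((InnerProductSpace.toDual ℝ _).symm.continuous.measurable.comp (measurable_fderiv ℝ W))

lemma norm_hatGrad_le {winf lam : ℝ} (hW : PointyPotential d W winf lam)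
    (x : EuclideanSpace ℝ (Fin d)) : ‖hatGrad d W x‖ ≤ winf := by
  by_cases hx : x = 0
  · simp [hatGrad, hx, hW.winf_nonneg]
  · simpa [hatGrad, hx] using hW.gradBound x hx

lemma abs_hatGrad_apply_le {winf lam : ℝ} (hW : PointyPotential d W winf lam)
    (x : EuclideanSpace ℝ (Fin d)) (c : Fin d) : |hatGrad d W x c| ≤ winf :=
  (PiLp.norm_apply_le _ c).trans (norm_hatGrad_le hW x)

end HatGrad

section Cells

variable {dx dy : ℝ}

lemma measurableSet_cell2 (dx dy : ℝ) (i j : ℤ) : MeasurableSet (cell2 dx dy i j) := by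
  have hcoord : ∀ c : Fin 2, Measurable fun p : ℝ² => p c := fun c => by fun_prop
  exact ((hcoord 0) measurableSet_Ico).inter ((hcoord 1) measurableSet_Ico)

lemma volume_cell2 (i j : ℤ) :
    volume (cell2 dx dy i j) = ENNReal.ofReal dx * ENNReal.ofReal dy := by
  have hpre : cell2 dx dy i j = (MeasurableEquiv.toLp 2 (Fin 2 → ℝ)).symm ⁻¹'
      (Set.univ.pi ![Set.Ico ((i : ℝ) * dx) ((i + 1) * dx),
        Set.Ico ((j : ℝ) * dy) ((j + 1) * dy)]) := by
    ext p
    simp [cell2, Fin.forall_fin_two]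
  rw [hpre, (EuclideanSpace.volume_preserving_symm_measurableEquiv_toLp (Fin 2)).measure_preimage
    (MeasurableSet.univ_pi fun c => by fin_cases c <;> exact measurableSet_Ico).nullMeasurableSet,
    volume_pi_pi, Fin.prod_univ_two]
  simp only [Matrix.cons_val_zero, Matrix.cons_val_one, Real.volume_Ico]
  congr 2 <;> ring

lemma volume_cell2_lt_top (i j : ℤ) : volume (cell2 dx dy i j) < ⊤ := by
  rw [volume_cell2]
  exact ENNReal.mul_lt_top ENNReal.ofReal_lt_top ENNReal.ofReal_lt_top

lemma measureReal_cell2 (hdx : 0 ≤ dx) (hdy : 0 ≤ dy) (i j : ℤ) :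
    volume.real (cell2 dx dy i j) = dx * dy := by
  rw [measureReal_def, volume_cell2, ← ENNReal.ofReal_mul hdx,
    ENNReal.toReal_ofReal (by positivity)]

lemma cell2_preimage_add (i j m n : ℤ) :
    (· + !₂[(m : ℝ) * dx, (n : ℝ) * dy]) ⁻¹' cell2 dx dy (i + m) (j + n) = cell2 dx dy i j := by
  ext p
  simp only [cell2, Int.cast_add, Set.mem_Ico, Set.preimage_ofPred_eq, PiLp.add_apply,
    Matrix.cons_val_zero, Matrix.cons_val_one, Set.mem_ofPred_eq]
  constructor <;> rintro ⟨⟨h1, h2⟩, h3, h4⟩ <;> refine ⟨⟨?_, ?_⟩, ?_, ?_⟩ <;> linarith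

lemma mem_cell2_iff (hdx : 0 < dx) (hdy : 0 < dy) {p : ℝ²} {i j : ℤ} :
    p ∈ cell2 dx dy i j ↔ i = ⌊p 0 / dx⌋ ∧ j = ⌊p 1 / dy⌋ := by
  simp only [cell2, Set.mem_ofPred_eq, Set.mem_Ico, eq_comm (a := i), eq_comm (a := j),
    Int.floor_eq_iff, le_div_iff₀ hdx, div_lt_iff₀ hdx, le_div_iff₀ hdy, div_lt_iff₀ hdy]

lemma pairwise_disjoint_cell2 (hdx : 0 < dx) (hdy : 0 < dy) :
    Pairwise (Function.onFun Disjoint fun q : ℤ × ℤ => cell2 dx dy q.1 q.2) := by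
  rintro ⟨i, j⟩ ⟨k, l⟩ hne
  refine Set.disjoint_left.mpr fun p hp hp' => hne ?_
  rw [mem_cell2_iff hdx hdy] at hp hp'
  exact Prod.ext (hp.1.trans hp'.1.symm) (hp.2.trans hp'.2.symm)

lemma iUnion_cell2 (hdx : 0 < dx) (hdy : 0 < dy) :
    ⋃ q : ℤ × ℤ, cell2 dx dy q.1 q.2 = Set.univ :=
  Set.eq_univ_of_forall fun p =>
    Set.mem_iUnion.mpr ⟨(⌊p 0 / dx⌋, ⌊p 1 / dy⌋), (mem_cell2_iff hdx hdy).mpr ⟨rfl, rfl⟩⟩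

lemma abs_intCast_le_of_mem_Ico {k : ℤ} {d t : ℝ} (hd : 0 < d)
    (ht : t ∈ Set.Ico ((k : ℝ) * d) ((k + 1) * d)) : |(k : ℝ)| ≤ |t| / d + 1 := by
  have h1 : (k : ℝ) ≤ t / d := (le_div_iff₀ hd).2 ht.1
  have h2 : t / d < k + 1 := (div_lt_iff₀ hd).2 ht.2
  have habs : |t / d| = |t| / d := by rw [abs_div, abs_of_pos hd]
  rw [abs_le]
  constructor <;> linarith [le_abs_self (t / d), neg_abs_le (t / d)]

end Cells

section Kernel

variable {W : ℝ² → ℝ} {winf lam dx dy : ℝ}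

lemma integrable_hatGrad_sub_prod (hW : PointyPotential 2 W winf lam) (c : Fin 2) {A B : Set ℝ²}
    (hA : volume A < ⊤) (hB : volume B < ⊤) :
    Integrable (fun z : ℝ² × ℝ² => hatGrad 2 W (z.2 - z.1) c)
      ((volume.restrict A).prod (volume.restrict B)) := by
  have := isFiniteMeasure_restrict.mpr hA.ne
  have := isFiniteMeasure_restrict.mpr hB.ne
  refine Integrable.of_bound ?_ winf (ae_of_all _ fun z => abs_hatGrad_apply_le hW _ c)
  exact ((measurable_pi_apply c).comp ((PiLp.continuous_ofLp 2 _).measurable.comp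
    (measurable_hatGrad.comp (measurable_snd.sub measurable_fst)))).aestronglyMeasurable

lemma abs_DW_le (hW : PointyPotential 2 W winf lam) (hdx : 0 ≤ dx) (hdy : 0 ≤ dy)
    (c : Fin 2) (i j k l : ℤ) : |DW W dx dy c i j k l| ≤ winf * (dx * dy) ^ 2 := by
  have hinner : ∀ q, ‖∫ p in cell2 dx dy i j, hatGrad 2 W (p - q) c‖ ≤ winf * (dx * dy) :=
    fun q => (norm_setIntegral_le_of_norm_le_const (volume_cell2_lt_top i j)
      fun p _ => abs_hatGrad_apply_le hW _ c).trans_eq (by rw [measureReal_cell2 hdx hdy])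
  have houter := norm_setIntegral_le_of_norm_le_const
    (volume_cell2_lt_top (dx := dx) (dy := dy) k l) fun q _ => hinner q
  rw [measureReal_cell2 hdx hdy] at houter
  simpa [DW, Real.norm_eq_abs, sq, mul_assoc] using houter

lemma DW_swap (hW : PointyPotential 2 W winf lam) (c : Fin 2) (i j k l : ℤ) :
    DW W dx dy c k l i j = -DW W dx dy c i j k l := by
  have hodd : ∀ p q : ℝ², hatGrad 2 W (p - q) c = -hatGrad 2 W (q - p) c := fun p q => by
    rw [← neg_sub, hatGrad_neg hW.even, PiLp.neg_apply]
  simp only [DW]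
  rw [integral_integral_swap (integrable_hatGrad_sub_prod hW c (volume_cell2_lt_top i j)
    (volume_cell2_lt_top k l)), ← integral_neg]
  congr 1; funext p
  rw [← integral_neg]
  congr 1; funext q
  exact hodd p q

lemma DW_add (c : Fin 2) (i j k l m n : ℤ) :
    DW W dx dy c (i + m) (j + n) (k + m) (l + n) = DW W dx dy c i j k l := by
  set v : ℝ² := !₂[(m : ℝ) * dx, (n : ℝ) * dy]
  have hmp := measurePreserving_add_right (volume : Measure ℝ²) v
  have hemb : MeasurableEmbedding (· + v) := (MeasurableEquiv.addRight v).measurableEmbedding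
  have hshift : ∀ (a b : ℤ) (f : ℝ² → ℝ),
      ∫ p in cell2 dx dy (a + m) (b + n), f p = ∫ p in cell2 dx dy a b, f (p + v) := by
    intro a b f
    rw [← hmp.setIntegral_preimage_emb hemb, cell2_preimage_add]
  simp only [DW, hshift, add_sub_add_right_eq_sub]

end Kernel

section Scheme

variable {W : ℝ² → ℝ} {winf lam dx dy dt : ℝ} {ρ : ℤ → ℤ → ℝ}

lemma summable_mul_DW (hW : PointyPotential 2 W winf lam) (hdx : 0 ≤ dx) (hdy : 0 ≤ dy)
    (hρ : Summable (Function.uncurry ρ)) (c : Fin 2) (i j : ℤ) :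
    Summable fun q : ℤ × ℤ => ρ q.1 q.2 * DW W dx dy c i j q.1 q.2 :=
  hρ.mul_of_abs_le fun q => abs_DW_le hW hdx hdy c i j q.1 q.2

lemma discVel_eq_tsum (hW : PointyPotential 2 W winf lam) (hdx : 0 ≤ dx) (hdy : 0 ≤ dy)
    (hρ : Summable (Function.uncurry ρ)) (c : Fin 2) (i j : ℤ) :
    discVel W dx dy ρ c i j =
      1 / (dx * dy) * ∑' q : ℤ × ℤ, ρ q.1 q.2 * DW W dx dy c i j q.1 q.2 := by
  have h := summable_mul_DW hW hdx hdy hρ c i j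
  rw [discVel, h.tsum_prod' h.prod_factor]

lemma abs_discVel_le (hW : PointyPotential 2 W winf lam) (hdx : 0 < dx) (hdy : 0 < dy)
    (hρ : Summable (Function.uncurry ρ)) (c : Fin 2) (i j : ℤ) :
    |discVel W dx dy ρ c i j| ≤ winf * (dx * dy) * ∑' q, |Function.uncurry ρ q| := by
  have hsum : ‖∑' q : ℤ × ℤ, ρ q.1 q.2 * DW W dx dy c i j q.1 q.2‖ ≤
      (∑' q, |Function.uncurry ρ q|) * (winf * (dx * dy) ^ 2) :=
    tsum_of_norm_bounded (hρ.abs.hasSum.mul_right _) fun q => by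
      rw [Real.norm_eq_abs, abs_mul]
      exact mul_le_mul_of_nonneg_left (abs_DW_le hW hdx.le hdy.le c i j q.1 q.2) (abs_nonneg _)
  rw [discVel_eq_tsum hW hdx.le hdy.le hρ, abs_mul, abs_of_pos (by positivity)]
  calc 1 / (dx * dy) * |∑' q : ℤ × ℤ, ρ q.1 q.2 * DW W dx dy c i j q.1 q.2|
      ≤ 1 / (dx * dy) * ((∑' q, |Function.uncurry ρ q|) * (winf * (dx * dy) ^ 2)) := by
        gcongr; exact hsum
    _ = winf * (dx * dy) * ∑' q, |Function.uncurry ρ q| := by field_simp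

variable (W dx dy ρ) in
/-- The central flux `a_{p+e/2} ρ_{p+e/2}` through the interface between the cells `p` and
`p + e`, for the velocity component `c`. -/
def fvFlux (c : Fin 2) (e p : ℤ × ℤ) : ℝ :=
  (discVel W dx dy ρ c p.1 p.2 + discVel W dx dy ρ c (p + e).1 (p + e).2) / 2 *
    ((ρ p.1 p.2 + ρ (p + e).1 (p + e).2) / 2)

lemma summable_mul_fvFlux (hW : PointyPotential 2 W winf lam) (hdx : 0 < dx) (hdy : 0 < dy)
    (hρ : Summable (Function.uncurry ρ)) (c : Fin 2) (e : ℤ × ℤ) {u : ℤ × ℤ → ℝ}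
    (hu : Summable fun p => u p * (ρ p.1 p.2 + ρ (p + e).1 (p + e).2)) :
    Summable fun p => u p * fvFlux W dx dy ρ c e p := by
  have hV : ∀ p : ℤ × ℤ,
      |(discVel W dx dy ρ c p.1 p.2 + discVel W dx dy ρ c (p + e).1 (p + e).2) / 2| ≤
        winf * (dx * dy) * ∑' q, |Function.uncurry ρ q| := fun p => by
    rw [abs_div, abs_two]
    linarith [abs_add_le (discVel W dx dy ρ c p.1 p.2) (discVel W dx dy ρ c (p + e).1 (p + e).2),
      abs_discVel_le hW hdx hdy hρ c p.1 p.2, abs_discVel_le hW hdx hdy hρ c (p + e).1 (p + e).2]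
  exact ((hu.div_const 2).mul_of_abs_le hV).congr fun p => by simp only [fvFlux]; ring

lemma hasSum_fvFlux (hW : PointyPotential 2 W winf lam) (hdx : 0 < dx) (hdy : 0 < dy)
    (hρ : Summable (Function.uncurry ρ)) (c : Fin 2) (e : ℤ × ℤ) :
    HasSum (fvFlux W dx dy ρ c e) 0 := by
  have hρe : Summable fun p : ℤ × ℤ => ρ (p + e).1 (p + e).2 :=
    (Equiv.addRight e).summable_iff.mpr hρ
  have hsum : Summable (fvFlux W dx dy ρ c e) := by
    simpa only [one_mul] using summable_mul_fvFlux hW hdx hdy hρ c e (u := fun _ => 1)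
      ((hρ.add hρe).congr fun p => (one_mul _).symm)
  have hzero := tsum_interface_flux_eq_zero (r := fun p : ℤ × ℤ => ρ p.1 p.2)
    (d := fun p q => DW W dx dy c p.1 p.2 q.1 q.2) hρ
    (fun p q => abs_DW_le hW hdx.le hdy.le c _ _ _ _)
    (fun p q => DW_swap hW c _ _ _ _) (fun p q e => DW_add c _ _ _ _ _ _) e
  refine hsum.hasSum_iff.mpr ?_
  calc ∑' p, fvFlux W dx dy ρ c e p
      = ∑' p : ℤ × ℤ, 1 / (dx * dy) / 4 * ((∑' q : ℤ × ℤ, ρ q.1 q.2 * DW W dx dy c p.1 p.2 q.1 q.2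
          + ∑' q : ℤ × ℤ, ρ q.1 q.2 * DW W dx dy c (p + e).1 (p + e).2 q.1 q.2) *
          (ρ p.1 p.2 + ρ (p + e).1 (p + e).2)) :=
        tsum_congr fun p => by simp only [fvFlux, discVel_eq_tsum hW hdx.le hdy.le hρ]; ring
    _ = 0 := by rw [tsum_mul_left, hzero, mul_zero]

lemma uncurry_fvStep (p : ℤ × ℤ) :
    Function.uncurry (fvStep W winf dx dy dt ρ) p = Function.uncurry ρ p
      - dt / dx * (fvFlux W dx dy ρ 0 (1, 0) p - fvFlux W dx dy ρ 0 (1, 0) (p - (1, 0)))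
      - dt / dy * (fvFlux W dx dy ρ 1 (0, 1) p - fvFlux W dx dy ρ 1 (0, 1) (p - (0, 1)))
      + dt * winf / (2 * dx) * (Function.uncurry ρ (p + (1, 0)) - 2 * Function.uncurry ρ p
        + Function.uncurry ρ (p - (1, 0)))
      + dt * winf / (2 * dy) * (Function.uncurry ρ (p + (0, 1)) - 2 * Function.uncurry ρ p
        + Function.uncurry ρ (p - (0, 1))) := by
  obtain ⟨i, j⟩ := p
  simp only [Function.uncurry_apply_pair, fvStep, fvFlux, Prod.mk_add_mk, Prod.mk_sub_mk,
    add_zero, sub_zero, sub_add_cancel]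

end Scheme

section InitialData

variable {μ : Measure ℝ²} {dx dy : ℝ}

lemma hasSum_setIntegral_cell2 (hdx : 0 < dx) (hdy : 0 < dy) {f : ℝ² → ℝ}
    (hf : Integrable f μ) :
    HasSum (fun p : ℤ × ℤ => ∫ x in cell2 dx dy p.1 p.2, f x ∂μ) (∫ x, f x ∂μ) := by
  have h := hasSum_integral_iUnion (fun p : ℤ × ℤ => measurableSet_cell2 dx dy p.1 p.2)
    (pairwise_disjoint_cell2 hdx hdy) (by rw [iUnion_cell2 hdx hdy]; exact hf.integrableOn)
  rwa [iUnion_cell2 hdx hdy, Measure.restrict_univ] at h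

lemma hasSum_measureReal_cell2 [IsProbabilityMeasure μ] (hdx : 0 < dx) (hdy : 0 < dy) :
    HasSum (fun p : ℤ × ℤ => μ.real (cell2 dx dy p.1 p.2)) 1 := by
  simpa using hasSum_setIntegral_cell2 (μ := μ) hdx hdy (integrable_const (1 : ℝ))

lemma summable_mul_measureReal_cell2_of_le [IsFiniteMeasure μ] (hdx : 0 < dx) (hdy : 0 < dy)
    {g : ℤ × ℤ → ℝ} {f : ℝ² → ℝ} (hf : Integrable f μ) (hg : ∀ p, 0 ≤ g p)
    (hgf : ∀ p, ∀ x ∈ cell2 dx dy p.1 p.2, g p ≤ f x) :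
    Summable fun p : ℤ × ℤ => g p * μ.real (cell2 dx dy p.1 p.2) :=
  Summable.of_nonneg_of_le (fun p => mul_nonneg (hg p) measureReal_nonneg)
    (fun p => setIntegral_ge_of_const_le_real (measurableSet_cell2 dx dy p.1 p.2)
      (measure_ne_top μ _) (hgf p) hf.integrableOn)
    (hasSum_setIntegral_cell2 hdx hdy hf).summable

lemma integrable_norm_of_memP2 (hμ : MemP2 μ) : Integrable (fun x => ‖x‖) μ :=
  have := hμ.1
  ((memLp_two_iff_integrable_sq_norm aestronglyMeasurable_id).2 hμ.2).integrable one_le_two |>.norm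

lemma summable_intCast_mul_measureReal_cell2 (hμ : MemP2 μ) (hdx : 0 < dx) (hdy : 0 < dy)
    {k : ℤ × ℤ → ℤ} {c : Fin 2} {d : ℝ} (hd : 0 < d)
    (hk : ∀ p, ∀ x ∈ cell2 dx dy p.1 p.2, x c ∈ Set.Ico ((k p : ℝ) * d) ((k p + 1) * d)) :
    Summable fun p : ℤ × ℤ => (k p : ℝ) * μ.real (cell2 dx dy p.1 p.2) := by
  have := hμ.1
  refine Summable.of_abs ?_
  simp only [abs_mul, abs_of_nonneg measureReal_nonneg]
  refine summable_mul_measureReal_cell2_of_le hdx hdy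
    (((integrable_norm_of_memP2 hμ).div_const d).add (integrable_const 1)) (fun p => abs_nonneg _)
    fun p x hx => (abs_intCast_le_of_mem_Ico hd (hk p x hx)).trans ?_
  show |x c| / d + 1 ≤ ‖x‖ / d + 1
  gcongr
  exact PiLp.norm_apply_le x c

end InitialData

section Conservation

variable {W : ℝ² → ℝ} {winf lam dx dy dt : ℝ} {w ℓ : ℤ × ℤ → ℝ} {T : ℝ}

theorem HasSum.mul_fvStep (hW : PointyPotential 2 W winf lam) (hdx : 0 < dx) (hdy : 0 < dy)
    {ρ : ℤ → ℤ → ℝ} (hρ : Summable (Function.uncurry ρ)) (hw : ∀ p e, w (p + e) = w p + ℓ e)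
    (hwρ : HasSum (fun p => w p * Function.uncurry ρ p) T) :
    HasSum (fun p => w p * Function.uncurry (fvStep W winf dx dy dt ρ) p) T := by
  have hdiv : ∀ (c : Fin 2) (e : ℤ × ℤ),
      HasSum (fun p => w p * (fvFlux W dx dy ρ c e p - fvFlux W dx dy ρ c e (p - e))) 0 :=
    fun c e => (hasSum_fvFlux hW hdx hdy hρ c e).mul_sub_apply_sub hw
      (summable_mul_fvFlux hW hdx hdy hρ c e
        ((hwρ.add (hρ.hasSum.mul_apply_add hw hwρ e)).summable.congr
          fun p => (mul_add _ _ _).symm)).hasSum e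
  have hlap : ∀ e : ℤ × ℤ, HasSum (fun p => w p * (Function.uncurry ρ (p + e)
      - 2 * Function.uncurry ρ p + Function.uncurry ρ (p - e))) 0 :=
    hρ.hasSum.mul_second_diff hw hwρ
  have h := (((hwρ.sub ((hdiv 0 (1, 0)).mul_left (dt / dx))).sub
    ((hdiv 1 (0, 1)).mul_left (dt / dy))).add ((hlap (1, 0)).mul_left (dt * winf / (2 * dx)))).add
    ((hlap (0, 1)).mul_left (dt * winf / (2 * dy)))
  simp only [mul_zero, sub_zero, add_zero] at h
  exact h.congr_fun fun p => by rw [uncurry_fvStep]; ring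

variable {μ : Measure ℝ²}

theorem hasSum_fvRho (hW : PointyPotential 2 W winf lam) (hdx : 0 < dx) (hdy : 0 < dy) {M : ℝ}
    (h0 : HasSum (Function.uncurry (fvRho W winf dx dy dt μ 0)) M) (n : ℕ) :
    HasSum (Function.uncurry (fvRho W winf dx dy dt μ n)) M := by
  induction n with
  | zero => exact h0
  | succ n ih =>
    have h := (ih.congr_fun fun p => one_mul _).mul_fvStep (w := fun _ => 1) (ℓ := fun _ => 0)
      (dt := dt) hW hdx hdy ih.summable fun _ _ => (add_zero 1).symm
    exact h.congr_fun fun p => (one_mul _).symm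

theorem HasSum.mul_fvRho (hW : PointyPotential 2 W winf lam) (hdx : 0 < dx) (hdy : 0 < dy)
    (hw : ∀ p e, w (p + e) = w p + ℓ e)
    (h0 : Summable (Function.uncurry (fvRho W winf dx dy dt μ 0)))
    (hw0 : HasSum (fun p => w p * Function.uncurry (fvRho W winf dx dy dt μ 0) p) T) (n : ℕ) :
    HasSum (fun p => w p * Function.uncurry (fvRho W winf dx dy dt μ n) p) T := by
  induction n with
  | zero => exact hw0
  | succ n ih => exact ih.mul_fvStep hW hdx hdy (hasSum_fvRho hW hdx hdy h0.hasSum n).summable hw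

end Conservation

theorem fv_scheme_conservation_general
    (W : EuclideanSpace ℝ (Fin 2) → ℝ) (winf lam : ℝ)
    (hW : PointyPotential 2 W winf lam)
    (ρini : Measure (EuclideanSpace ℝ (Fin 2))) (hini : MemP2 ρini)
    (dx dy dt : ℝ) (hdx : 0 < dx) (hdy : 0 < dy) :
    ∀ n : ℕ,
      Summable (fun p : ℤ × ℤ => fvRho W winf dx dy dt ρini n p.1 p.2 * (dx * dy)) ∧
      (∑' p : ℤ × ℤ, fvRho W winf dx dy dt ρini n p.1 p.2 * (dx * dy)) =
        (∑' p : ℤ × ℤ, fvRho W winf dx dy dt ρini 0 p.1 p.2 * (dx * dy)) ∧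
      (∑' p : ℤ × ℤ, fvRho W winf dx dy dt ρini n p.1 p.2 * (dx * dy)) = 1 ∧
      Summable (fun p : ℤ × ℤ => (p.1 : ℝ) * dx * fvRho W winf dx dy dt ρini n p.1 p.2) ∧
      (∑' p : ℤ × ℤ, (p.1 : ℝ) * dx * fvRho W winf dx dy dt ρini n p.1 p.2) =
        (∑' p : ℤ × ℤ, (p.1 : ℝ) * dx * fvRho W winf dx dy dt ρini 0 p.1 p.2) ∧
      Summable (fun p : ℤ × ℤ => (p.2 : ℝ) * dy * fvRho W winf dx dy dt ρini n p.1 p.2) ∧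
      (∑' p : ℤ × ℤ, (p.2 : ℝ) * dy * fvRho W winf dx dy dt ρini n p.1 p.2) =
        (∑' p : ℤ × ℤ, (p.2 : ℝ) * dy * fvRho W winf dx dy dt ρini 0 p.1 p.2) := by
  intro n
  have hprob : IsProbabilityMeasure ρini := hini.1
  have h0 : HasSum (Function.uncurry (fvRho W winf dx dy dt ρini 0)) (1 / (dx * dy)) :=
    (hasSum_measureReal_cell2 hdx hdy).div_const (dx * dy)
  have hmass : ∀ m, HasSum (fun p : ℤ × ℤ => fvRho W winf dx dy dt ρini m p.1 p.2 * (dx * dy)) 1 :=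
    fun m => by
      have h := (hasSum_fvRho hW hdx hdy h0 m).mul_right (dx * dy)
      rw [one_div_mul_cancel (by positivity)] at h
      exact h
  have hx0 : Summable fun p : ℤ × ℤ => (p.1 : ℝ) * dx * fvRho W winf dx dy dt ρini 0 p.1 p.2 :=
    ((summable_intCast_mul_measureReal_cell2 hini hdx hdy hdx (k := Prod.fst) (c := 0)
      fun _ _ hx => hx.1).div_const dy).congr fun p => by
      simp only [fvRho, measureReal_def]; field_simp
  have hy0 : Summable fun p : ℤ × ℤ => (p.2 : ℝ) * dy * fvRho W winf dx dy dt ρini 0 p.1 p.2 :=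
    ((summable_intCast_mul_measureReal_cell2 hini hdx hdy hdy (k := Prod.snd) (c := 1)
      fun _ _ hx => hx.2).div_const dx).congr fun p => by
      simp only [fvRho, measureReal_def]; field_simp
  have hx := hx0.hasSum.mul_fvRho (ℓ := fun e => e.1 * dx) hW hdx hdy
    (fun p e => by simp only [Prod.fst_add, Int.cast_add]; ring) h0.summable n
  have hy := hy0.hasSum.mul_fvRho (ℓ := fun e => e.2 * dy) hW hdx hdy
    (fun p e => by simp only [Prod.snd_add, Int.cast_add]; ring) h0.summable n
  exact ⟨(hmass n).summable, (hmass n).tsum_eq.trans (hmass 0).tsum_eq.symm, (hmass n).tsum_eq,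
    hx.summable, hx.tsum_eq, hy.summable, hy.tsum_eq⟩

/-- conservation: under the CFL condition, the finite volume scheme
conserves the total mass (equal to `1`) and the center of mass, all the relevant sums
being absolutely convergent (summable). -/
theorem fv_scheme_conservation
    (W : EuclideanSpace ℝ (Fin 2) → ℝ) (winf lam : ℝ)
    (hW : PointyPotential 2 W winf lam)
    (ρini : Measure (EuclideanSpace ℝ (Fin 2))) (hini : MemP2 ρini)
    (dx dy dt : ℝ) (hdx : 0 < dx) (hdy : 0 < dy) (hdt : 0 < dt)
    (hCFL : winf * (1 / dx + 1 / dy) * dt ≤ 1 / 2) :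
    ∀ n : ℕ,
      Summable (fun p : ℤ × ℤ => fvRho W winf dx dy dt ρini n p.1 p.2 * (dx * dy)) ∧
      (∑' p : ℤ × ℤ, fvRho W winf dx dy dt ρini n p.1 p.2 * (dx * dy)) =
        (∑' p : ℤ × ℤ, fvRho W winf dx dy dt ρini 0 p.1 p.2 * (dx * dy)) ∧
      (∑' p : ℤ × ℤ, fvRho W winf dx dy dt ρini n p.1 p.2 * (dx * dy)) = 1 ∧
      Summable (fun p : ℤ × ℤ => (p.1 : ℝ) * dx * fvRho W winf dx dy dt ρini n p.1 p.2) ∧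
      (∑' p : ℤ × ℤ, (p.1 : ℝ) * dx * fvRho W winf dx dy dt ρini n p.1 p.2) =
        (∑' p : ℤ × ℤ, (p.1 : ℝ) * dx * fvRho W winf dx dy dt ρini 0 p.1 p.2) ∧
      Summable (fun p : ℤ × ℤ => (p.2 : ℝ) * dy * fvRho W winf dx dy dt ρini n p.1 p.2) ∧
      (∑' p : ℤ × ℤ, (p.2 : ℝ) * dy * fvRho W winf dx dy dt ρini n p.1 p.2) =
        (∑' p : ℤ × ℤ, (p.2 : ℝ) * dy * fvRho W winf dx dy dt ρini 0 p.1 p.2) :=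
  fv_scheme_conservation_general W winf lam hW ρini hini dx dy dt hdx hdy
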